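/- arXiv:2305.01830 — 2 statements merged into one kernel-verified Lean document; each statement's English description precedes it below -/
import Mathlib

section
/- Let V : [0,∞) → [0,∞) be a differentiable function with V(t) ≥ 0 for all t, and suppose there exist constants K > 0 and α with 0 < α < 1 such that V'(t) ≤ -K·V(t)^α for all t ≥ 0. Then V reaches zero in finite time: there exists t* with t* ≤ V(0)^{1-α}/(K(1-α)) such that V(t) = 0 for all t ≥ t*. -/
/-- **Finite-time stability Lyapunov lemma.**
If `V : [0,∞) → [0,∞)` is differentiable, nonnegative, and satisfies
`V'(t) ≤ -K·V(t)^α` for all `t ≥ 0` with `K > 0` and `0 < α < 1`, then `V`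
reaches zero in finite time `t* ≤ V(0)^(1-α)/(K(1-α))`. -/
theorem finite_time_stability
    (V : ℝ → ℝ) (K α : ℝ) (hK : 0 < K) (hα0 : 0 < α) (hα1 : α < 1)
    (hVnonneg : ∀ t, 0 ≤ t → 0 ≤ V t)
    (hVdiff : ∀ t, 0 ≤ t → DifferentiableAt ℝ V t)
    (hVineq : ∀ t, 0 ≤ t → deriv V t ≤ -K * V t ^ α) :
    ∃ tstar : ℝ, tstar ≤ V 0 ^ (1 - α) / (K * (1 - α)) ∧
      ∀ t, tstar ≤ t → V t = 0 := by
  set T := V 0 ^ (1 - α) / (K * (1 - α)) with hTdef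
  have h1α : 0 < 1 - α := by linarith
  have hK1 : 0 < K * (1 - α) := by positivity
  have hT0 : 0 ≤ T := div_nonneg (Real.rpow_nonneg (hVnonneg 0 le_rfl) _) hK1.le
  have hVcont : ContinuousOn V (Set.Ici (0:ℝ)) :=
    fun t ht => (hVdiff t ht).continuousAt.continuousWithinAt
  have hanti : AntitoneOn V (Set.Ici (0:ℝ)) := by
    apply antitoneOn_of_deriv_nonpos (convex_Ici 0) hVcont
    · intro t ht
      rw [interior_Ici] at ht
      exact (hVdiff t ht.le).differentiableWithinAt
    · intro t ht
      rw [interior_Ici] at ht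
      have h1 := hVineq t ht.le
      have h2 : 0 ≤ V t ^ α := Real.rpow_nonneg (hVnonneg t ht.le) α
      nlinarith
  have hVT : V T = 0 := by
    by_cases hz : ∃ s, 0 ≤ s ∧ s ≤ T ∧ V s = 0
    · obtain ⟨s, hs0, hsT, hVs⟩ := hz
      have h1 : V T ≤ V s := hanti (Set.mem_Ici.2 hs0) (Set.mem_Ici.2 hT0) hsT
      have h2 : 0 ≤ V T := hVnonneg T hT0
      linarith [hVs ▸ h1]
    · push_neg at hz
      have hpos : ∀ s, 0 ≤ s → s ≤ T → 0 < V s := fun s h1 h2 =>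
        lt_of_le_of_ne (hVnonneg s h1) (Ne.symm (hz s h1 h2))
      set g : ℝ → ℝ := fun t => V t ^ (1 - α) + K * (1 - α) * t with hgdef
      have hganti : AntitoneOn g (Set.Icc 0 T) := by
        apply antitoneOn_of_deriv_nonpos (convex_Icc 0 T)
        · apply ContinuousOn.add
          · exact ContinuousOn.rpow_const (hVcont.mono Set.Icc_subset_Ici_self)
              (fun x hx => Or.inr h1α.le)
          · exact (continuous_const.mul continuous_id).continuousOn
        · intro t ht
          rw [interior_Icc] at ht
          have hvt : V t ≠ 0 := (hpos t ht.1.le ht.2.le).ne'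
          have hd : HasDerivAt g
              (deriv V t * (1 - α) * V t ^ (1 - α - 1) + K * (1 - α)) t := by
            have h1 : HasDerivAt (fun t => V t ^ (1 - α))
                (deriv V t * (1 - α) * V t ^ (1 - α - 1)) t :=
              (hVdiff t ht.1.le).hasDerivAt.rpow_const (Or.inl hvt)
            have h2 : HasDerivAt (fun t => K * (1 - α) * t) (K * (1 - α)) t := by
              simpa using (hasDerivAt_id t).const_mul (K * (1 - α))
            exact h1.add h2
          exact hd.differentiableAt.differentiableWithinAt
        · intro t ht
          rw [interior_Icc] at ht
          have hvt : 0 < V t := hpos t ht.1.le ht.2.le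
          have hd : HasDerivAt g
              (deriv V t * (1 - α) * V t ^ (1 - α - 1) + K * (1 - α)) t := by
            have h1 : HasDerivAt (fun t => V t ^ (1 - α))
                (deriv V t * (1 - α) * V t ^ (1 - α - 1)) t :=
              (hVdiff t ht.1.le).hasDerivAt.rpow_const (Or.inl hvt.ne')
            have h2 : HasDerivAt (fun t => K * (1 - α) * t) (K * (1 - α)) t := by
              simpa using (hasDerivAt_id t).const_mul (K * (1 - α))
            exact h1.add h2
          rw [hd.deriv]
          have hineq := hVineq t ht.1.le
          have hcpos : 0 ≤ (1 - α) * V t ^ (1 - α - 1) := by positivity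
          have key : deriv V t * ((1 - α) * V t ^ (1 - α - 1)) ≤
              -K * V t ^ α * ((1 - α) * V t ^ (1 - α - 1)) :=
            mul_le_mul_of_nonneg_right hineq hcpos
          have hprod : V t ^ (1 - α - 1) * V t ^ α = 1 := by
            rw [← Real.rpow_add hvt]
            norm_num
          nlinarith
      have hg : g T ≤ g 0 := hganti (Set.mem_Icc.2 ⟨le_rfl, hT0⟩)
        (Set.mem_Icc.2 ⟨hT0, le_rfl⟩) hT0
      have hKT : K * (1 - α) * T = V 0 ^ (1 - α) := by
        rw [hTdef]; field_simp
      have hVTle : V T ^ (1 - α) ≤ 0 := by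
        simp only [hgdef] at hg
        rw [hKT] at hg
        linarith
      have : 0 < V T ^ (1 - α) := Real.rpow_pos_of_pos (hpos T hT0 le_rfl) _
      linarith
  exact ⟨T, le_rfl, fun t htT => le_antisymm
    (hVT ▸ hanti (Set.mem_Ici.2 hT0) (Set.mem_Ici.2 (hT0.trans htT)) htT)
    (hVnonneg t (hT0.trans htT))⟩
end

section
/- Let V : [0,∞) → [0,∞) be a differentiable function with V(t) ≥ 0 for all t, and suppose there exist constants k, p, q > 0 and α, β > 0 with 0 < αk < 1 and βk > 1 such that V'(t) ≤ -(p·V(t)^α + q·V(t)^β)^k for all t ≥ 0. Then V reaches zero in a fixed time independent of V(0): there exists T ≤ T_max := 1/(p^k(1-αk)) + 1/(q^k(βk-1)) such that V(t) = 0 for all t ≥ T. -/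
/-!
Along any stretch where `V > 0`, the bound `V' ≤ -c V^γ` (γ ≠ 1) makes `V^(1-γ)/(1-γ)` decrease
at rate at least `c`. The power sum dominates both `p^k V^(αk)` and `q^k V^(βk)`. Applied with
the fast exponent `βk > 1`, this forces `V < 1` after time `1/(q^k(βk-1))`, whatever `V(0)` is;
applied with the slow exponent `αk < 1`, staying positive for a further time `1/(p^k(1-αk))`
would require `V > 1` at the start of that stretch. So `V` vanishes by `T_max`, and stays zero
because it is nonincreasing and nonnegative.
-/

open Set Real

theorem rpow_mul_rpow_le_rpow_add {x p y α k : ℝ} (hx : 0 ≤ x) (hp : 0 ≤ p) (hy : 0 ≤ y)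
    (hk : 0 ≤ k) : p ^ k * x ^ (α * k) ≤ (p * x ^ α + y) ^ k := by
  rw [rpow_mul hx, ← mul_rpow hp (rpow_nonneg hx α)]
  exact rpow_le_rpow (by positivity) (le_add_of_nonneg_right hy) hk

section DecayAlongInterval

variable {V : ℝ → ℝ} {a b c γ : ℝ}

theorem mul_sub_le_of_deriv_le_neg_mul_rpow (hab : a ≤ b) (hγ : γ ≠ 1)
    (hpos : ∀ t ∈ Icc a b, 0 < V t) (hdiff : ∀ t ∈ Icc a b, DifferentiableAt ℝ V t)
    (hderiv : ∀ t ∈ Icc a b, deriv V t ≤ -(c * V t ^ γ)) :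
    c * (b - a) ≤ (V a ^ (1 - γ) - V b ^ (1 - γ)) / (1 - γ) := by
  have hγ' : 1 - γ ≠ 0 := sub_ne_zero.2 hγ.symm
  set W : ℝ → ℝ := fun t ↦ V t ^ (1 - γ) / (1 - γ)
  have hW : ∀ t ∈ Icc a b, HasDerivAt W (deriv V t * V t ^ (-γ)) t := fun t ht ↦ by
    refine ((hdiff t ht).hasDerivAt.rpow_const (Or.inl (hpos t ht).ne')).div_const (1 - γ)
      |>.congr_deriv ?_
    rw [sub_sub_cancel_left]
    field_simp
  have hW_le : ∀ t ∈ Icc a b, deriv W t ≤ -c := fun t ht ↦ calc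
    deriv W t = deriv V t * V t ^ (-γ) := (hW t ht).deriv
    _ ≤ -(c * V t ^ γ) * V t ^ (-γ) :=
      mul_le_mul_of_nonneg_right (hderiv t ht) (rpow_nonneg (hpos t ht).le _)
    _ = -c := by rw [neg_mul, mul_assoc, ← rpow_add (hpos t ht), add_neg_cancel, rpow_zero, mul_one]
  have hWcont : ContinuousOn W (Icc a b) := fun t ht ↦ (hW t ht).continuousAt.continuousWithinAt
  have hWdiff : DifferentiableOn ℝ W (interior (Icc a b)) := fun t ht ↦
    (hW t (interior_subset ht)).differentiableAt.differentiableWithinAt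
  have := (convex_Icc a b).image_sub_le_mul_sub_of_deriv_le hWcont hWdiff
    (fun t ht ↦ hW_le t (interior_subset ht)) a (left_mem_Icc.2 hab) b (right_mem_Icc.2 hab) hab
  rw [sub_div]
  linarith

theorem apply_lt_one_of_deriv_le_neg_mul_rpow (hc : 0 < c) (hγ : 1 < γ)
    (hpos : ∀ t ∈ Icc a (a + 1 / (c * (γ - 1))), 0 < V t)
    (hdiff : ∀ t ∈ Icc a (a + 1 / (c * (γ - 1))), DifferentiableAt ℝ V t)
    (hderiv : ∀ t ∈ Icc a (a + 1 / (c * (γ - 1))), deriv V t ≤ -(c * V t ^ γ)) :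
    V (a + 1 / (c * (γ - 1))) < 1 := by
  have hγ' : 0 < γ - 1 := sub_pos.2 hγ
  have hT : 0 ≤ 1 / (c * (γ - 1)) := by positivity
  have hab := le_add_of_nonneg_right (a := a) hT
  have h := mul_sub_le_of_deriv_le_neg_mul_rpow hab hγ.ne' hpos hdiff hderiv
  have hVa := rpow_pos_of_pos (hpos a (left_mem_Icc.2 hab)) (1 - γ)
  have hVb := hpos _ (right_mem_Icc.2 hab)
  have hpow : 1 < V (a + 1 / (c * (γ - 1))) ^ (1 - γ) := by
    rw [add_sub_cancel_left, mul_one_div, div_mul_cancel_left₀ hc.ne', ← neg_div_neg_eq, neg_sub,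
      neg_sub, inv_eq_one_div, div_le_div_iff_of_pos_right hγ'] at h
    linarith
  rcases (one_lt_rpow_iff_of_pos hVb).1 hpow with ⟨_, h⟩ | ⟨h, _⟩
  · linarith
  · exact h

theorem one_lt_apply_of_deriv_le_neg_mul_rpow (hc : 0 < c) (hγ : γ < 1)
    (hpos : ∀ t ∈ Icc a (a + 1 / (c * (1 - γ))), 0 < V t)
    (hdiff : ∀ t ∈ Icc a (a + 1 / (c * (1 - γ))), DifferentiableAt ℝ V t)
    (hderiv : ∀ t ∈ Icc a (a + 1 / (c * (1 - γ))), deriv V t ≤ -(c * V t ^ γ)) :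
    1 < V a := by
  have hγ' : 0 < 1 - γ := sub_pos.2 hγ
  have hT : 0 ≤ 1 / (c * (1 - γ)) := by positivity
  have hab := le_add_of_nonneg_right (a := a) hT
  have h := mul_sub_le_of_deriv_le_neg_mul_rpow hab hγ.ne hpos hdiff hderiv
  have hVa := hpos a (left_mem_Icc.2 hab)
  have hVb := rpow_pos_of_pos (hpos _ (right_mem_Icc.2 hab)) (1 - γ)
  have hpow : 1 < V a ^ (1 - γ) := by
    rw [add_sub_cancel_left, mul_one_div, div_mul_cancel_left₀ hc.ne', inv_eq_one_div,
      div_le_div_iff_of_pos_right hγ'] at h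
    linarith
  rcases (one_lt_rpow_iff_of_pos hVa).1 hpow with ⟨h, _⟩ | ⟨_, h⟩
  · exact h
  · linarith

end DecayAlongInterval

theorem fixed_time_stability_general
    (V : ℝ → ℝ) (k p q α β : ℝ)
    (hk : 0 < k) (hp : 0 < p) (hq : 0 < q)
    (hαk1 : α * k < 1) (hβk : 1 < β * k)
    (hVnonneg : ∀ t, 0 ≤ t → 0 ≤ V t)
    (hVdiff : ∀ t, 0 ≤ t → DifferentiableAt ℝ V t)
    (hVineq : ∀ t, 0 ≤ t → deriv V t ≤ -((p * V t ^ α + q * V t ^ β) ^ k)) :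
    ∃ T : ℝ, T ≤ 1 / (p ^ k * (1 - α * k)) + 1 / (q ^ k * (β * k - 1)) ∧
      ∀ t, T ≤ t → V t = 0 := by
  set T₁ := 1 / (q ^ k * (β * k - 1))
  set T₂ := 1 / (p ^ k * (1 - α * k))
  have hT₁ : 0 ≤ T₁ := by have := sub_pos.2 hβk; positivity
  have hT₂ : 0 ≤ T₂ := by have := sub_pos.2 hαk1; positivity
  have hslow : ∀ t, 0 ≤ t → deriv V t ≤ -(p ^ k * V t ^ (α * k)) := fun t ht ↦
    (hVineq t ht).trans <| neg_le_neg <|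
      rpow_mul_rpow_le_rpow_add (hVnonneg t ht) hp.le (by have := hVnonneg t ht; positivity) hk.le
  have hfast : ∀ t, 0 ≤ t → deriv V t ≤ -(q ^ k * V t ^ (β * k)) := fun t ht ↦
    (hVineq t ht).trans <| neg_le_neg <| add_comm (p * V t ^ α) _ ▸
      rpow_mul_rpow_le_rpow_add (hVnonneg t ht) hq.le (by have := hVnonneg t ht; positivity) hk.le
  have hanti : AntitoneOn V (Ici 0) :=
    antitoneOn_of_deriv_nonpos (convex_Ici 0)
      (fun t ht ↦ (hVdiff t ht).continuousAt.continuousWithinAt)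
      (fun t ht ↦ (hVdiff t (interior_subset ht)).differentiableWithinAt)
      (fun t ht ↦ (hslow t (interior_subset ht)).trans <| by
        have := hVnonneg t (interior_subset ht); simp only [neg_nonpos]; positivity)
  obtain ⟨s, hs, hVs⟩ : ∃ s ∈ Icc 0 (T₂ + T₁), V s ≤ 0 := by
    by_contra! hpos
    have h₁ : V (0 + T₁) < 1 :=
      apply_lt_one_of_deriv_le_neg_mul_rpow (by positivity) hβk
        (fun t ht ↦ hpos t ⟨ht.1, by linarith [ht.2]⟩) (fun t ht ↦ hVdiff t ht.1)
        (fun t ht ↦ hfast t ht.1)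
    have h₂ : 1 < V (0 + T₁) :=
      one_lt_apply_of_deriv_le_neg_mul_rpow (by positivity) hαk1
        (fun t ht ↦ hpos t ⟨by linarith [ht.1], by linarith [ht.2]⟩)
        (fun t ht ↦ hVdiff t (by linarith [ht.1])) (fun t ht ↦ hslow t (by linarith [ht.1]))
    linarith
  refine ⟨T₂ + T₁, le_rfl, fun t ht ↦ ?_⟩
  have hst : s ≤ t := hs.2.trans ht
  exact le_antisymm ((hanti hs.1 (hs.1.trans hst) hst).trans hVs) (hVnonneg t (hs.1.trans hst))

/-- **Fixed-time stability Lyapunov lemma.**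
If `V : [0,∞) → [0,∞)` is differentiable, nonnegative, and satisfies
`V'(t) ≤ -(p·V(t)^α + q·V(t)^β)^k` for all `t ≥ 0` with `k, p, q > 0`,
`0 < αk < 1` and `βk > 1`, then `V` reaches zero within the fixed time
`T_max = 1/(p^k(1-αk)) + 1/(q^k(βk-1))`, independent of `V(0)`. -/
theorem fixed_time_stability
    (V : ℝ → ℝ) (k p q α β : ℝ)
    (hk : 0 < k) (hp : 0 < p) (hq : 0 < q) (hα : 0 < α) (hβ : 0 < β)
    (hαk0 : 0 < α * k) (hαk1 : α * k < 1) (hβk : 1 < β * k)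
    (hVnonneg : ∀ t, 0 ≤ t → 0 ≤ V t)
    (hVdiff : ∀ t, 0 ≤ t → DifferentiableAt ℝ V t)
    (hVineq : ∀ t, 0 ≤ t → deriv V t ≤ -((p * V t ^ α + q * V t ^ β) ^ k)) :
    ∃ T : ℝ, T ≤ 1 / (p ^ k * (1 - α * k)) + 1 / (q ^ k * (β * k - 1)) ∧
      ∀ t, T ≤ t → V t = 0 :=
  fixed_time_stability_general V k p q α β hk hp hq hαk1 hβk hVnonneg hVdiff hVineq
end
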